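/- Fix δ ∈ ℤ. Let λ be a partition with a removable box e_i such that s_δ(λ) = s_δ(λ − e_i), and let λ′ be a partition such that λ′/λ is a minimal δ-balanced skew. Then there exists w ∈ 𝒟 such that w · e_δ(λ) = e_δ(λ′) and w · e_δ(λ − e_i) = e_δ(ν) for some partition ν; in particular w · e_δ(λ − e_i) is a strictly decreasing (dominant) sequence. -/
import Mathlib


/-! ### Partitions and Young diagrams (rows/columns indexed from 1) -/

/-- An integer partition, encoded as its sequence of row lengths, with
`f 0 = 0` (rows are indexed from `1`), weakly decreasing on positive indices,
and eventually zero. -/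
def IsPartition (f : ℕ → ℕ) : Prop :=
  f 0 = 0 ∧ (∀ i, 1 ≤ i → f (i + 1) ≤ f i) ∧ ∃ N, ∀ i, N ≤ i → f i = 0

/-- The boxes of the Young diagram of `f`, as pairs (row, column) of integers,
both indexed from 1. -/
def cells (f : ℕ → ℕ) : Set (ℤ × ℤ) :=
  {p | 1 ≤ p.1 ∧ 1 ≤ p.2 ∧ p.2 ≤ (f p.1.toNat : ℤ)}

/-- The skew λ/μ of two partitions. -/
def skewOf (lam mu : ℕ → ℕ) : Set (ℤ × ℤ) := cells lam \ cells mu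

/-- The δ-charge of a box `p = (i,j)`: `δ - 1 - 2 (j - i)`. -/
def chg (δ : ℤ) (p : ℤ × ℤ) : ℤ := δ - 1 - 2 * (p.2 - p.1)

/-- The π-rotation of the plane about the point `(a/2, b/2)`, as a map on boxes:
the box `(i,j)` (the unit square `[i-1,i] × [j-1,j]`) is sent to the box
`(a + 1 - i, b + 1 - j)`. -/
def boxRot (a b : ℤ) (p : ℤ × ℤ) : ℤ × ℤ := (a + 1 - p.1, b + 1 - p.2)

/-- Two boxes are adjacent when they share an edge. -/
def adjacentCell (p q : ℤ × ℤ) : Prop := |p.1 - q.1| + |p.2 - q.2| = 1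

/-- A rim: a (nonempty, finite) set of boxes which forms a path under
edge-adjacency (possibly a single box). -/
def IsRim (S : Set (ℤ × ℤ)) : Prop :=
  ∃ (n : ℕ) (s : Fin (n + 1) → ℤ × ℤ),
    Function.Injective s ∧ Set.range s = S ∧
      ∀ k l : Fin (n + 1), adjacentCell (s k) (s l) ↔ ((k : ℕ) + 1 = l ∨ (l : ℕ) + 1 = k)

/-- `MiBSWitness δ lam mu a b` : the π-rotation about the point `(a/2, b/2)`
(which lies on the δ-charge-0 diagonal) exhibits the skew λ/μ as a union of two
rims interchanged by this rotation, with no row of the skew fixed by the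
rotation (the rotation sends row `i` to row `a + 1 - i`). -/
def MiBSWitness (δ : ℤ) (lam mu : ℕ → ℕ) (a b : ℤ) : Prop :=
  b - a = δ - 1 ∧
  (∃ R1 R2 : Set (ℤ × ℤ),
      IsRim R1 ∧ IsRim R2 ∧ skewOf lam mu = R1 ∪ R2 ∧ boxRot a b '' R1 = R2) ∧
  ∀ p ∈ skewOf lam mu, 2 * p.1 ≠ a + 1

/-- λ/μ is a minimal δ-balanced skew. -/
def IsMiBS (δ : ℤ) (lam mu : ℕ → ℕ) : Prop :=
  IsPartition lam ∧ IsPartition mu ∧ cells mu ⊆ cells lam ∧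
    ∃ a b : ℤ, MiBSWitness δ lam mu a b

/-- `μ ←^δ λ` : λ/μ is a minimal δ-balanced skew. -/
def MiBSRel (δ : ℤ) (mu lam : ℕ → ℕ) : Prop := IsMiBS δ lam mu

/-- `μ <^δ λ` : the transitive closure of `←^δ`. -/
def ltDelta (δ : ℤ) : (ℕ → ℕ) → (ℕ → ℕ) → Prop := Relation.TransGen (MiBSRel δ)

/-- `μ ∼^δ λ` : the reflexive-symmetric-transitive closure of `←^δ`
(the block relation). -/
def simDelta (δ : ℤ) : (ℕ → ℕ) → (ℕ → ℕ) → Prop := Relation.EqvGen (MiBSRel δ)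

/-- Remove the last box of row `i`. -/
def removeBox (f : ℕ → ℕ) (i : ℕ) : ℕ → ℕ := fun k => if k = i then f i - 1 else f k

/-- Add a box at the end of row `i`. -/
def addBox (f : ℕ → ℕ) (i : ℕ) : ℕ → ℕ := fun k => if k = i then f i + 1 else f k

/-- The box `e_i` at the end of row `i` of `f` is removable. -/
def Removable (f : ℕ → ℕ) (i : ℕ) : Prop :=
  1 ≤ i ∧ 1 ≤ f i ∧ IsPartition (removeBox f i)

/-- The cell `p` is a removable box of the partition `f`. -/
def RemovableCell (f : ℕ → ℕ) (p : ℤ × ℤ) : Prop :=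
  ∃ i : ℕ, Removable f i ∧ p = ((i : ℤ), (f i : ℤ))

/-- `(ρ_δ)_i = -δ/2 - (i - 1)`. -/
noncomputable def rho (δ : ℤ) (i : ℕ) : ℝ := -(δ : ℝ) / 2 - ((i : ℝ) - 1)

/-- `e_δ(λ) = λ + ρ_δ ∈ ℝ^ℕ`. -/
noncomputable def eDel (δ : ℤ) (f : ℕ → ℕ) : ℕ → ℝ := fun i => (f i : ℝ) + rho δ i

/-- The singularity `s_δ(λ)`: the number of pairs `i < j` of (positive) positions
with `e_δ(λ)_i = -e_δ(λ)_j`. -/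
noncomputable def sing (δ : ℤ) (f : ℕ → ℕ) : ℕ :=
  Set.ncard {q : ℕ × ℕ | 1 ≤ q.1 ∧ q.1 < q.2 ∧ eDel δ f q.1 = -(eDel δ f q.2)}

/-- The boxes of `S` lying in row `i`. -/
def rowCells (S : Set (ℤ × ℤ)) (i : ℤ) : Set (ℤ × ℤ) := {p | p ∈ S ∧ p.1 = i}

/-- Rows `i` and `j` of the skew `S` are matched by the π-rotation about
`(a/2, b/2)`: the rotation maps the skew boxes in row `i` onto those in row `j`. -/
def MatchedRows (a b : ℤ) (S : Set (ℤ × ℤ)) (i j : ℤ) : Prop :=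
  (rowCells S i).Nonempty ∧ boxRot a b '' rowCells S i = rowCells S j

/-- `e_i` is a rim-end removable box of the skew λ/μ: a removable box of λ
contained in the skew, of maximal absolute δ-charge among such boxes. -/
def RimEndBox (δ : ℤ) (lam mu : ℕ → ℕ) (i : ℕ) : Prop :=
  Removable lam i ∧ ((i : ℤ), (lam i : ℤ)) ∈ skewOf lam mu ∧
    ∀ i' : ℕ, Removable lam i' → ((i' : ℤ), (lam i' : ℤ)) ∈ skewOf lam mu →
      |chg δ ((i' : ℤ), (lam i' : ℤ))| ≤ |chg δ ((i : ℤ), (lam i : ℤ))|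

/-- A set of boxes is boxy if every box lies in some 2×2 block of boxes
entirely contained in the set. -/
def Boxy (S : Set (ℤ × ℤ)) : Prop :=
  ∀ p ∈ S, ∃ q : ℤ × ℤ,
    p ∈ ({q, (q.1 + 1, q.2), (q.1, q.2 + 1), (q.1 + 1, q.2 + 1)} : Set (ℤ × ℤ)) ∧
    ({q, (q.1 + 1, q.2), (q.1, q.2 + 1), (q.1 + 1, q.2 + 1)} : Set (ℤ × ℤ)) ⊆ S

/-! ### Sequences, the reflection group 𝒟, and orbits -/

/-- A strongly decreasing sequence (on positive positions): `v_i - v_{i+1} ≥ 1`. -/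
def StronglyDecr (v : ℕ → ℝ) : Prop := ∀ i, 1 ≤ i → v (i + 1) ≤ v i - 1

/-- Entrywise order on sequences (positions indexed from 1). -/
def leSeq (v w : ℕ → ℝ) : Prop := ∀ i, 1 ≤ i → v i ≤ w i

/-- `w'` covers `w` in the entrywise order restricted to `S`. -/
def SeqCovers (S : Set (ℕ → ℝ)) (w w' : ℕ → ℝ) : Prop :=
  leSeq w w' ∧ w ≠ w' ∧ ¬∃ u ∈ S, u ≠ w ∧ u ≠ w' ∧ leSeq w u ∧ leSeq u w'

/-- The map `(ij)` swapping the `i`-th and `j`-th entries of a sequence. -/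
def swapFun (i j : ℕ) (v : ℕ → ℝ) : ℕ → ℝ :=
  fun k => if k = i then v j else if k = j then v i else v k

/-- The map `(ij)_-` replacing the pair of entries `(v_i, v_j)` by `(-v_j, -v_i)`. -/
def negSwapFun (i j : ℕ) (v : ℕ → ℝ) : ℕ → ℝ :=
  fun k => if k = i then -v j else if k = j then -v i else v k

lemma swapFun_involutive (i j : ℕ) : Function.Involutive (swapFun i j) := by
  intro v; funext k; unfold swapFun
  split_ifs <;> simp_all

lemma negSwapFun_involutive (i j : ℕ) : Function.Involutive (negSwapFun i j) := by
  intro v; funext k; unfold negSwapFun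
  split_ifs <;> simp_all

/-- `(ij)` as a bijection of `ℝ^ℕ`. -/
def swapPerm (i j : ℕ) : Equiv.Perm (ℕ → ℝ) :=
  Function.Involutive.toPerm _ (swapFun_involutive i j)

/-- `(ij)_-` as a bijection of `ℝ^ℕ`. -/
def negSwapPerm (i j : ℕ) : Equiv.Perm (ℕ → ℝ) :=
  Function.Involutive.toPerm _ (negSwapFun_involutive i j)

/-- The generators `(ij)`, `(ij)_-` for `1 ≤ i < j`. -/
def Dgens : Set (Equiv.Perm (ℕ → ℝ)) :=
  {g | ∃ i j : ℕ, 1 ≤ i ∧ i < j ∧ (g = swapPerm i j ∨ g = negSwapPerm i j)}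

/-- The group 𝒟 of bijections of `ℝ^ℕ` generated by all `(ij)` and `(ij)_-`. -/
def Dgroup : Subgroup (Equiv.Perm (ℕ → ℝ)) := Subgroup.closure Dgens

/-- `V(v) = 𝒟v ∩ A^+`. -/
def Vset (v : ℕ → ℝ) : Set (ℕ → ℝ) :=
  {w | (∃ g ∈ Dgroup, g v = w) ∧ StronglyDecr w}

/-- Position `i ≥ 1` of `v` belongs to no doubleton. -/
def keptPos (v : ℕ → ℝ) (i : ℕ) : Prop :=
  1 ≤ i ∧ ∀ j, 1 ≤ j → j ≠ i → v j ≠ -v i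

/-- `Reg v`: delete all entries of `v` belonging to doubletons, and re-index
the remaining entries in their original order (positions from 1). -/
noncomputable def Reg (v : ℕ → ℝ) : ℕ → ℝ :=
  fun n => if n = 0 then v 0 else v (Nat.nth (keptPos v) (n - 1))

/-- Insert the value `a` into the sequence `t` after position `i`. -/
def insertAt (t : ℕ → ℝ) (i : ℕ) (a : ℝ) : ℕ → ℝ :=
  fun k => if k ≤ i then t k else if k = i + 1 then a else t (k - 1)

/-- The set of positive naturals occurring as entries of `w`. -/
def Pmap (w : ℕ → ℝ) : Set ℕ := {n | 1 ≤ n ∧ ∃ i, 1 ≤ i ∧ w i = (n : ℝ)}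

/-- The sequence `(v_-)_i = -i`. -/
noncomputable def vminus : ℕ → ℝ := fun i => -(i : ℝ)

open Classical in
/-- The product `w = ∏_{{i,j} ∈ R} (ij)_-` over the matched row pairs of a MiBS
with π-rotation about `(a/2, ·)` (row `i` is matched with row `a + 1 - i`),
acting on a sequence `v`. -/
noncomputable def wAct (a : ℤ) (S : Set (ℤ × ℤ)) (v : ℕ → ℝ) : ℕ → ℝ :=
  fun k => if 1 ≤ k ∧ (∃ p ∈ S, p.1 = (k : ℤ)) then -v (a + 1 - (k : ℤ)).toNat else v k

/-! ### TL-diagrams -/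

/-- Reading `0` (not in `a`) as `+1` and `1` (in `a`) as `-1`:
the depth of the interval `[p, r]`. -/
def tlDepth (a : Finset ℕ) (p r : ℕ) : ℤ :=
  (((Finset.Icc p r).filter (fun i => i ∉ a)).card : ℤ) -
    (((Finset.Icc p r).filter (fun i => i ∈ a)).card : ℤ)

/-- `{p, q}` is a pair formed in the first (bracket-matching) phase of the
construction of `𝒯(a)`. -/
def MatchedPair (a : Finset ℕ) (p q : ℕ) : Prop :=
  1 ≤ p ∧ p < q ∧ p ∉ a ∧ q ∈ a ∧ tlDepth a p q = 0 ∧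
    ∀ r, p ≤ r → r < q → 0 < tlDepth a p r

/-- The `1`-positions left unpaired by the first phase. -/
def leftover (a : Finset ℕ) : Set ℕ := {q | q ∈ a ∧ ¬∃ p, MatchedPair a p q}

/-- All the pair parts of `𝒯(a)`: the matched pairs together with the
consecutive pairing (from the left) of the leftover `1`-positions. -/
noncomputable def TLpairs (a : Finset ℕ) : Set (Set ℕ) :=
  {P | (∃ p q, MatchedPair a p q ∧ P = {p, q}) ∨
       (∃ k : ℕ, 2 * k + 1 < (leftover a).ncard ∧
          P = {Nat.nth (· ∈ leftover a) (2 * k), Nat.nth (· ∈ leftover a) (2 * k + 1)})}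

/-- The parts of the partition `𝒯(a)` of `{1,2,3,…}`: the pair parts, and a
singleton for every other positive position. -/
noncomputable def TLparts (a : Finset ℕ) : Set (Set ℕ) :=
  TLpairs a ∪ {P | ∃ x : ℕ, 1 ≤ x ∧ (∀ Q ∈ TLpairs a, x ∉ Q) ∧ P = {x}}

/-! ### Brauer diagrams -/

/-- `(m,l)`-pair-partitions, encoded as fixed-point-free involutions of
`{1,…,m} ⊔ {1',…,l'}`. -/
def BrDiag (m l : ℕ) : Set ((Fin m ⊕ Fin l) → (Fin m ⊕ Fin l)) :=
  {f | Function.Involutive f ∧ ∀ x, f x ≠ x}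

/-- `Br^l(m,l)`: every primed element lies in a propagating block. -/
def BrProp (m l : ℕ) : Set ((Fin m ⊕ Fin l) → (Fin m ⊕ Fin l)) :=
  {f | f ∈ BrDiag m l ∧ ∀ i : Fin l, ∃ j : Fin m, f (Sum.inr i) = Sum.inl j}

/-- `Br^{l̲}(m,l)`: moreover the propagating blocks are non-crossing. -/
def BrNC (m l : ℕ) : Set ((Fin m ⊕ Fin l) → (Fin m ⊕ Fin l)) :=
  {f | f ∈ BrProp m l ∧ ∀ (i h : Fin l) (j k : Fin m),
      f (Sum.inr i) = Sum.inl j → f (Sum.inr h) = Sum.inl k → i < h → j < k}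

/-- The pair-partition with the same non-propagating blocks as `w`, and with
propagating block `{j, σ(i)'}` for each propagating block `{j, i'}` of `w`. -/
def brMap (m l : ℕ) (w : (Fin m ⊕ Fin l) → (Fin m ⊕ Fin l)) (σ : Equiv.Perm (Fin l)) :
    (Fin m ⊕ Fin l) → (Fin m ⊕ Fin l) :=
  fun x => Sum.map id σ (w (Sum.map id σ.symm x))


/-! ### Auxiliary lemmas -/

lemma coe_negSwapPerm (p q : ℕ) : ⇑(negSwapPerm p q) = negSwapFun p q := rfl

lemma negSwapPerm_symm (p q : ℕ) (h : p ≠ q) : negSwapPerm p q = negSwapPerm q p := by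
  apply Equiv.ext
  intro v
  show negSwapFun p q v = negSwapFun q p v
  funext k
  unfold negSwapFun
  split_ifs <;> simp_all

lemma negSwapPerm_mem (p q : ℕ) (h1 : 1 ≤ p) (h2 : 1 ≤ q) (hne : p ≠ q) :
    negSwapPerm p q ∈ Dgroup := by
  rcases lt_or_gt_of_ne hne with h | h
  · exact Subgroup.subset_closure ⟨p, q, h1, h, Or.inr rfl⟩
  · rw [negSwapPerm_symm p q hne]
    exact Subgroup.subset_closure ⟨q, p, h2, h, Or.inr rfl⟩

lemma prodAct (σ : ℕ → ℕ) :
    ∀ F : Finset ℕ, (∀ k ∈ F, 1 ≤ k ∧ σ k ∈ F ∧ σ (σ k) = k ∧ σ k ≠ k) →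
    ∃ g ∈ Dgroup, ∀ (v : ℕ → ℝ) (k : ℕ), g v k = if k ∈ F then -v (σ k) else v k := by
  intro F
  induction F using Finset.strongInduction with
  | _ F ih =>
    intro hF
    rcases F.eq_empty_or_nonempty with rfl | ⟨k₀, hk₀⟩
    · exact ⟨1, Subgroup.one_mem _, fun v k => by simp⟩
    · obtain ⟨hk₀1, hσk₀, hσσ, hσne⟩ := hF k₀ hk₀
      set F' : Finset ℕ := F \ {k₀, σ k₀} with hF'
      have hss : F' ⊂ F := by
        apply Finset.sdiff_ssubset (by simp [Finset.insert_subset_iff, hk₀, hσk₀])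
        simp
      have hF'h : ∀ k ∈ F', 1 ≤ k ∧ σ k ∈ F' ∧ σ (σ k) = k ∧ σ k ≠ k := by
        intro k hk
        rw [hF'] at hk
        simp only [Finset.mem_sdiff, Finset.mem_insert, Finset.mem_singleton] at hk
        obtain ⟨hkF, hkne⟩ := hk
        push_neg at hkne
        obtain ⟨h1, h2, h3, h4⟩ := hF k hkF
        refine ⟨h1, ?_, h3, h4⟩
        rw [hF']
        simp only [Finset.mem_sdiff, Finset.mem_insert, Finset.mem_singleton]
        refine ⟨h2, ?_⟩
        push_neg
        constructor
        · intro he; exact hkne.2 (by rw [← he, h3])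
        · intro he
          exact hkne.1 (by
            have := congrArg σ he
            rwa [h3, hσσ] at this)
      obtain ⟨g', hg'mem, hg'act⟩ := ih F' hss hF'h
      refine ⟨negSwapPerm k₀ (σ k₀) * g',
        Subgroup.mul_mem _ (negSwapPerm_mem _ _ hk₀1 (hF _ hσk₀).1 (Ne.symm hσne)) hg'mem,
        fun v k => ?_⟩
      have hnot1 : k₀ ∉ F' := by simp [hF']
      have hnot2 : σ k₀ ∉ F' := by simp [hF']
      rw [Equiv.Perm.mul_apply, coe_negSwapPerm]
      unfold negSwapFun
      by_cases h1 : k = k₀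
      · subst h1
        rw [if_pos rfl, hg'act, if_neg hnot2, if_pos hk₀]
      · rw [if_neg h1]
        by_cases h2 : k = σ k₀
        · subst h2
          rw [if_pos rfl, hg'act, if_neg hnot1, if_pos hσk₀, hσσ]
        · rw [if_neg h2, hg'act]
          have : k ∈ F' ↔ k ∈ F := by
            simp [hF', Finset.mem_sdiff, h1, h2]
          by_cases h3 : k ∈ F
          · rw [if_pos (this.mpr h3), if_pos h3]
          · rw [if_neg (fun hc => h3 (this.mp hc)), if_neg h3]

lemma eDel_apply (δ : ℤ) (f : ℕ → ℕ) (k : ℕ) :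
    eDel δ f k = (f k : ℝ) + (-(δ : ℝ) / 2 - ((k : ℝ) - 1)) := rfl

lemma eDel_step (δ : ℤ) (f : ℕ → ℕ) (hf : IsPartition f) (p : ℕ) (hp : 1 ≤ p) :
    eDel δ f (p + 1) ≤ eDel δ f p - 1 := by
  have := hf.2.1 p hp
  rw [eDel_apply, eDel_apply]
  have : (f (p+1) : ℝ) ≤ f p := by exact_mod_cast this
  push_cast
  linarith

lemma eDel_le (δ : ℤ) (f : ℕ → ℕ) (hf : IsPartition f) (p q : ℕ) (hp : 1 ≤ p) (hpq : p ≤ q) :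
    eDel δ f q ≤ eDel δ f p - ((q : ℝ) - p) := by
  induction q, hpq using Nat.le_induction with
  | base => simp
  | succ n hn ihn =>
    have h1 := eDel_step δ f hf n (le_trans hp hn)
    push_cast
    push_cast at ihn
    linarith

lemma eDel_inj (δ : ℤ) (f : ℕ → ℕ) (hf : IsPartition f) (p q : ℕ) (hp : 1 ≤ p) (hq : 1 ≤ q)
    (h : eDel δ f p = eDel δ f q) : p = q := by
  rcases lt_trichotomy p q with hlt | he | hlt
  · have := eDel_le δ f hf p q hp (le_of_lt hlt)
    have : (q : ℝ) - p ≤ 0 := by linarith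
    have : (q : ℝ) ≤ p := by linarith
    exact absurd (by exact_mod_cast this) (not_le.mpr hlt)
  · exact he
  · have := eDel_le δ f hf q p hq (le_of_lt hlt)
    have : (p : ℝ) ≤ q := by linarith
    exact absurd (by exact_mod_cast this) (not_le.mpr hlt)

lemma dset_finite (δ : ℤ) (f : ℕ → ℕ) (hf : IsPartition f) :
    {q : ℕ × ℕ | 1 ≤ q.1 ∧ q.1 < q.2 ∧ eDel δ f q.1 = -(eDel δ f q.2)}.Finite := by
  obtain ⟨B, hB⟩ := exists_nat_gt (2 * eDel δ f 1 + 1)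
  apply Set.Finite.subset ((Finset.range B ×ˢ Finset.range B).finite_toSet)
  rintro ⟨p, q⟩ ⟨h1, h2, h3⟩
  dsimp only at h1 h2 h3
  simp only [Finset.coe_product, Set.mem_prod, Finset.mem_coe, Finset.mem_range]
  have hq1 : 1 ≤ q := le_trans h1 (le_of_lt h2)
  have hup := eDel_le δ f hf 1 p le_rfl h1
  have huq := eDel_le δ f hf 1 q le_rfl hq1
  push_cast at hup huq
  have hp1 : (1 : ℝ) ≤ p := by exact_mod_cast h1
  have : (q : ℝ) < B := by nlinarith
  have hqB : q < B := by exact_mod_cast this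
  exact ⟨lt_trans (by exact_mod_cast h2) hqB, hqB⟩

lemma addBox_isPartition (f : ℕ → ℕ) (hf : IsPartition f) (j : ℕ) (hj : 1 ≤ j)
    (hgood : j = 1 ∨ f j < f (j - 1)) : IsPartition (addBox f j) := by
  obtain ⟨h0, hdec, N, hN⟩ := hf
  refine ⟨by unfold addBox; rw [if_neg (by omega)]; exact h0, ?_, ?_⟩
  · intro k hk
    have hd := hdec k hk
    unfold addBox
    split_ifs with ha hb hb
    · omega
    · rcases hgood with h | h
      · omega
      · have hj1 : j - 1 = k := by omega
        rw [hj1] at h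
        omega
    · rw [← hb]
      omega
    · exact hd
  · refine ⟨max N (j + 1), fun k hk => ?_⟩
    unfold addBox
    rw [if_neg (by omega)]
    exact hN k (by omega)

lemma removeBox_isPartition (f : ℕ → ℕ) (hf : IsPartition f) (n : ℕ) (hn : 1 ≤ n)
    (hgood : f (n + 1) < f n) : IsPartition (removeBox f n) := by
  obtain ⟨h0, hdec, N, hN⟩ := hf
  refine ⟨by unfold removeBox; rw [if_neg (by omega)]; exact h0, ?_, ?_⟩
  · intro k hk
    have hd := hdec k hk
    unfold removeBox
    split_ifs with ha hb hb
    · omega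
    · rw [ha] at hd
      omega
    · subst hb
      omega
    · exact hd
  · refine ⟨max N (n + 1), fun k hk => ?_⟩
    unfold removeBox
    rw [if_neg (by omega)]
    exact hN k (by omega)

lemma mem_skew (lam' lam : ℕ → ℕ) (p : ℤ × ℤ) :
    p ∈ skewOf lam' lam ↔ 1 ≤ p.1 ∧ (lam p.1.toNat : ℤ) < p.2 ∧ p.2 ≤ (lam' p.1.toNat : ℤ) := by
  unfold skewOf cells
  simp only [Set.mem_diff, Set.mem_setOf_eq]
  constructor
  · rintro ⟨⟨h1, h2, h3⟩, h4⟩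
    refine ⟨h1, ?_, h3⟩
    by_contra hc
    push_neg at hc
    exact h4 ⟨h1, h2, hc⟩
  · rintro ⟨h1, h2, h3⟩
    have h0 : (0 : ℤ) ≤ (lam p.1.toNat : ℤ) := Int.natCast_nonneg _
    exact ⟨⟨h1, by linarith, h3⟩, fun h => by linarith [h.2.2]⟩

lemma boxRot_boxRot (a b : ℤ) (p : ℤ × ℤ) : boxRot a b (boxRot a b p) = p := by
  obtain ⟨x, y⟩ := p
  unfold boxRot
  simp only [Prod.mk.injEq]
  omega

/-- Suppose λ has a removable box `e_i` with
`s_δ(λ) = s_δ(λ - e_i)`, and λ'/λ is a minimal δ-balanced skew. Then there is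
`w ∈ 𝒟` with `w · e_δ(λ) = e_δ(λ')` and `w · e_δ(λ - e_i) = e_δ(ν)` for some
partition ν; in particular `w · e_δ(λ - e_i)` is dominant. -/
theorem stmt19 (δ : ℤ) (lam : ℕ → ℕ) (hl : IsPartition lam) (i : ℕ)
    (hrem : Removable lam i) (hs : sing δ lam = sing δ (removeBox lam i))
    (lam' : ℕ → ℕ) (hmibs : IsMiBS δ lam' lam) :
    ∃ g ∈ Dgroup, g (eDel δ lam) = eDel δ lam' ∧
      ∃ nu : ℕ → ℕ, IsPartition nu ∧ g (eDel δ (removeBox lam i)) = eDel δ nu := by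
  classical
  obtain ⟨hi1, hfi1, hμpart⟩ := hrem
  obtain ⟨hl', -, hsub, a, b, hba, ⟨R1, R2, hR1, hR2, hSR, hrot⟩, hnofix⟩ := hmibs
  obtain ⟨N, hN⟩ := hl'.2.2
  -- rotation invariance of the skew
  have hτ : ∀ p, p ∈ skewOf lam' lam → boxRot a b p ∈ skewOf lam' lam := by
    intro p hp
    rw [hSR] at hp ⊢
    rcases hp with hp | hp
    · exact Or.inr (hrot ▸ Set.mem_image_of_mem _ hp)
    · rw [← hrot] at hp
      obtain ⟨q, hq, rfl⟩ := hp
      rw [boxRot_boxRot]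
      exact Or.inl hq
  -- lam ≤ lam'
  have hle : ∀ k : ℕ, lam k ≤ lam' k := by
    intro k
    rcases Nat.eq_zero_or_pos (lam k) with h | h
    · omega
    · rcases Nat.eq_zero_or_pos k with rfl | hk1
      · rw [hl.1] at h; omega
      · have hc : ((k : ℤ), (lam k : ℤ)) ∈ cells lam := by
          refine ⟨by show (1:ℤ) ≤ (k:ℤ); exact_mod_cast hk1,
            by show (1:ℤ) ≤ (lam k : ℤ); exact_mod_cast h, ?_⟩
          simp [Int.toNat_natCast]
        obtain ⟨-, -, h3⟩ := hsub hc
        simp only [Int.toNat_natCast] at h3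
        exact_mod_cast h3
  -- boxes of the skew in a changed row
  have hbox : ∀ k : ℕ, 1 ≤ k → lam k < lam' k →
      ((k : ℤ), (lam k : ℤ) + 1) ∈ skewOf lam' lam := by
    intro k hk1 hkC
    rw [mem_skew]
    refine ⟨by show (1:ℤ) ≤ (k:ℤ); exact_mod_cast hk1, ?_, ?_⟩ <;>
      simp only [Int.toNat_natCast] <;> [omega; exact_mod_cast hkC]
  -- the key rotation relation for changed rows
  have key : ∀ k : ℕ, 1 ≤ k → lam k < lam' k →
      1 ≤ a + 1 - (k : ℤ) ∧ ((lam ((a + 1 - (k : ℤ)).toNat) : ℤ) = b - lam' k ∧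
        (lam' ((a + 1 - (k : ℤ)).toNat) : ℤ) = b - lam k) := by
    intro k hk1 hkC
    have ht1 := hτ _ (hbox k hk1 hkC)
    have hb2 : ((k : ℤ), (lam' k : ℤ)) ∈ skewOf lam' lam := by
      rw [mem_skew]
      exact ⟨by show (1:ℤ) ≤ (k:ℤ); exact_mod_cast hk1,
        by simp only [Int.toNat_natCast]; exact_mod_cast hkC,
        by simp [Int.toNat_natCast]⟩
    have ht2 := hτ _ hb2
    simp only [boxRot] at ht1 ht2
    rw [mem_skew] at ht1 ht2
    dsimp only at ht1 ht2
    obtain ⟨hj1, ht1b, ht1c⟩ := ht1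
    obtain ⟨-, ht2b, -⟩ := ht2
    set jN : ℕ := (a + 1 - (k : ℤ)).toNat with hjN
    have hjZ : (jN : ℤ) = a + 1 - (k : ℤ) := Int.toNat_of_nonneg (by omega)
    refine ⟨hj1, ?_⟩
    -- so far: lam' jN ≥ b - lam k (ht1c), lam jN ≤ b - lam' k - ... (ht2b)
    have hrow : (lam jN : ℤ) < lam' jN := by
      have hkC' : (lam k : ℤ) < lam' k := by exact_mod_cast hkC
      omega
    have hb3 : ((jN : ℤ), (lam jN : ℤ) + 1) ∈ skewOf lam' lam := by
      rw [mem_skew]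
      refine ⟨by omega, ?_, ?_⟩ <;> simp only [Int.toNat_natCast] <;> omega
    have hb4 : ((jN : ℤ), (lam' jN : ℤ)) ∈ skewOf lam' lam := by
      rw [mem_skew]
      refine ⟨by omega, ?_, ?_⟩ <;> simp only [Int.toNat_natCast] <;> omega
    have ht3 := hτ _ hb3
    have ht4 := hτ _ hb4
    simp only [boxRot] at ht3 ht4
    rw [mem_skew] at ht3 ht4
    dsimp only at ht3 ht4
    have hkj : a + 1 - (jN : ℤ) = (k : ℤ) := by omega
    rw [hkj, Int.toNat_natCast] at ht3 ht4
    obtain ⟨-, ht3b, ht3c⟩ := ht3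
    obtain ⟨-, ht4b, -⟩ := ht4
    constructor <;> omega
  -- the set of changed rows and the pairing involution
  set σf : ℕ → ℕ := fun k => (a + 1 - (k : ℤ)).toNat with hσdef
  set F : Finset ℕ := (Finset.range N).filter (fun k => 1 ≤ k ∧ lam k < lam' k) with hFdef
  have hmemF : ∀ k, k ∈ F ↔ (1 ≤ k ∧ lam k < lam' k) := by
    intro k
    simp only [hFdef, Finset.mem_filter, Finset.mem_range]
    constructor
    · tauto
    · intro h
      refine ⟨?_, h⟩
      by_contra hN'
      push_neg at hN'
      have := hN k hN'
      omega
  have hσZ : ∀ k ∈ F, ((σf k : ℕ) : ℤ) = a + 1 - (k : ℤ) := by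
    intro k hk
    obtain ⟨hk1, hkC⟩ := (hmemF k).mp hk
    exact Int.toNat_of_nonneg (by have := (key k hk1 hkC).1; omega)
  have hσF : ∀ k ∈ F, σf k ∈ F := by
    intro k hk
    obtain ⟨hk1, hkC⟩ := (hmemF k).mp hk
    obtain ⟨hj1, hlma, hlmb⟩ := key k hk1 hkC
    rw [hmemF]
    constructor
    · have := hσZ k hk; omega
    · have hσk : σf k = (a + 1 - (k : ℤ)).toNat := rfl
      rw [hσk]
      omega
  have hσfacts : ∀ k ∈ F, 1 ≤ k ∧ σf k ∈ F ∧ σf (σf k) = k ∧ σf k ≠ k := by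
    intro k hk
    obtain ⟨hk1, hkC⟩ := (hmemF k).mp hk
    refine ⟨hk1, hσF k hk, ?_, ?_⟩
    · show (a + 1 - ((σf k : ℕ) : ℤ)).toNat = k
      rw [hσZ k hk]
      have : a + 1 - (a + 1 - (k : ℤ)) = (k : ℤ) := by ring
      rw [this, Int.toNat_natCast]
    · intro he
      have h2 := hnofix _ (hbox k hk1 hkC)
      have h3 := hσZ k hk
      rw [he] at h3
      dsimp only at h2
      omega
  obtain ⟨g₀, hg₀mem, hg₀act⟩ := prodAct σf F hσfacts
  -- value relations
  have hsame : ∀ k, k ∉ F → lam' k = lam k := by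
    intro k hk
    rcases Nat.eq_zero_or_pos k with rfl | hk1
    · rw [hl.1, hl'.1]
    · have h1 := hle k
      have h2 := (hmemF k).not.mp hk
      push_neg at h2
      omega
  have hsameE : ∀ k, k ∉ F → eDel δ lam' k = eDel δ lam k := by
    intro k hk
    rw [eDel_apply, eDel_apply, hsame k hk]
  have hpair : ∀ k ∈ F, eDel δ lam' k = -(eDel δ lam (σf k)) := by
    intro k hk
    obtain ⟨hk1, hkC⟩ := (hmemF k).mp hk
    obtain ⟨hj1, hlma, hlmb⟩ := key k hk1 hkC
    rw [eDel_apply, eDel_apply]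
    have c1 : (lam (σf k) : ℝ) = (b : ℝ) - lam' k := by exact_mod_cast hlma
    have c2 : ((σf k : ℕ) : ℝ) = (a : ℝ) + 1 - k := by exact_mod_cast hσZ k hk
    have c3 : (b : ℝ) = (a : ℝ) + (δ : ℝ) - 1 := by
      have : b = a + δ - 1 := by omega
      exact_mod_cast this
    rw [c1, c2, c3]
    ring
  have hg₀lam : g₀ (eDel δ lam) = eDel δ lam' := by
    funext k
    rw [hg₀act]
    by_cases hk : k ∈ F
    · rw [if_pos hk, ← hpair k hk]
    · rw [if_neg hk, hsameE k hk]
  -- values of the partition with the box removed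
  have heμ : ∀ k, k ≠ i → eDel δ (removeBox lam i) k = eDel δ lam k := by
    intro k hk
    rw [eDel_apply, eDel_apply]
    unfold removeBox
    rw [if_neg hk]
  have heμi : eDel δ (removeBox lam i) i = eDel δ lam i - 1 := by
    rw [eDel_apply, eDel_apply]
    unfold removeBox
    rw [if_pos rfl, Nat.cast_sub hfi1]
    push_cast
    ring
  -- the removability gap
  have hgap : lam (i + 1) + 1 ≤ lam i := by
    have h1 := hμpart.2.1 i hi1
    unfold removeBox at h1
    rw [if_neg (by omega), if_pos rfl] at h1
    omega
  -- no entry of e(lam) equals e_i - 1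
  have hnostep : ∀ k, 1 ≤ k → eDel δ lam k = eDel δ lam i - 1 → False := by
    intro k hk1 hke
    have hki : i < k := by
      by_contra hc
      push_neg at hc
      have h1 := eDel_le δ lam hl k i hk1 hc
      have h2 : (k : ℝ) ≤ i := by exact_mod_cast hc
      linarith
    have h2 := eDel_le δ lam hl (i + 1) k (by omega) (by omega)
    have h3 : eDel δ lam (i + 1) ≤ eDel δ lam i - 2 := by
      rw [eDel_apply, eDel_apply]
      have : (lam (i + 1) : ℝ) + 1 ≤ lam i := by exact_mod_cast hgap
      push_cast
      linarith
    have hik : (i : ℝ) + 1 ≤ k := by exact_mod_cast hki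
    push_cast at h2
    linarith
  -- the singularity hypothesis, in usable form
  have hsingle : (∃ k, 1 ≤ k ∧ k ≠ i ∧ eDel δ lam k = 1 - eDel δ lam i) →
      ∃ m, 1 ≤ m ∧ m ≠ i ∧ eDel δ lam m = -(eDel δ lam i) := by
    rintro ⟨k, hk1, hki, hkval⟩
    set Dl := {q : ℕ × ℕ | 1 ≤ q.1 ∧ q.1 < q.2 ∧ eDel δ lam q.1 = -(eDel δ lam q.2)} with hDl
    set Dm := {q : ℕ × ℕ | 1 ≤ q.1 ∧ q.1 < q.2 ∧
      eDel δ (removeBox lam i) q.1 = -(eDel δ (removeBox lam i) q.2)} with hDm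
    have hfl : Dl.Finite := dset_finite δ lam hl
    have hfm : Dm.Finite := dset_finite δ _ hμpart
    set Tl := {q : ℕ × ℕ | q ∈ Dl ∧ (q.1 = i ∨ q.2 = i)} with hTlo
    set Al := {q : ℕ × ℕ | q ∈ Dl ∧ ¬(q.1 = i ∨ q.2 = i)} with hAlo
    set Tm := {q : ℕ × ℕ | q ∈ Dm ∧ (q.1 = i ∨ q.2 = i)} with hTmo
    set Am := {q : ℕ × ℕ | q ∈ Dm ∧ ¬(q.1 = i ∨ q.2 = i)} with hAmo
    have hTlD : Tl ⊆ Dl := fun q hq => hq.1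
    have hAlD : Al ⊆ Dl := fun q hq => hq.1
    have hTmD : Tm ⊆ Dm := fun q hq => hq.1
    have hAmD : Am ⊆ Dm := fun q hq => hq.1
    have hUl : Dl = Tl ∪ Al := by
      ext q
      simp only [hTlo, hAlo, Set.mem_union, Set.mem_setOf_eq]
      tauto
    have hUm : Dm = Tm ∪ Am := by
      ext q
      simp only [hTmo, hAmo, Set.mem_union, Set.mem_setOf_eq]
      tauto
    have hc1 : Dl.ncard = Tl.ncard + Al.ncard := by
      rw [hUl]
      exact Set.ncard_union_eq (Set.disjoint_left.mpr (fun q hq hq' => hq'.2 hq.2))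
        (hfl.subset hTlD) (hfl.subset hAlD)
    have hc2 : Dm.ncard = Tm.ncard + Am.ncard := by
      rw [hUm]
      exact Set.ncard_union_eq (Set.disjoint_left.mpr (fun q hq hq' => hq'.2 hq.2))
        (hfm.subset hTmD) (hfm.subset hAmD)
    have hAeq : Al = Am := by
      ext ⟨p, q⟩
      simp only [hAlo, hAmo, hDl, hDm, Set.mem_setOf_eq]
      constructor
      · rintro ⟨⟨h1, h2, h3⟩, h4⟩
        push_neg at h4
        exact ⟨⟨h1, h2, by rw [heμ p h4.1, heμ q h4.2]; exact h3⟩,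
          by push_neg; exact h4⟩
      · rintro ⟨⟨h1, h2, h3⟩, h4⟩
        push_neg at h4
        rw [heμ p h4.1, heμ q h4.2] at h3
        exact ⟨⟨h1, h2, h3⟩, by push_neg; exact h4⟩
    have hsing' : Dl.ncard = Dm.ncard := by
      have e1 : sing δ lam = Dl.ncard := rfl
      have e2 : sing δ (removeBox lam i) = Dm.ncard := rfl
      rw [← e1, ← e2]
      exact hs
    have hTT : Tl.ncard = Tm.ncard := by
      rw [hAeq] at hc1
      omega
    have hTmne : Tm.Nonempty := by
      rcases lt_or_gt_of_ne hki with h | h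
      · refine ⟨(k, i), ?_⟩
        simp only [hTmo, hDm, Set.mem_setOf_eq]
        refine ⟨⟨hk1, h, ?_⟩, Or.inr trivial⟩
        rw [heμ k hki, heμi]
        linarith
      · refine ⟨(i, k), ?_⟩
        simp only [hTmo, hDm, Set.mem_setOf_eq]
        refine ⟨⟨hi1, h, ?_⟩, Or.inl trivial⟩
        rw [heμ k hki, heμi]
        linarith
    have hTlne : Tl.Nonempty := by
      have h0 : 0 < Tm.ncard := (Set.ncard_pos (hfm.subset hTmD)).mpr hTmne
      rw [← hTT] at h0
      exact (Set.ncard_pos (hfl.subset hTlD)).mp h0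
    obtain ⟨⟨p, q⟩, hmem⟩ := hTlne
    simp only [hTlo, hDl, Set.mem_setOf_eq] at hmem
    obtain ⟨⟨h1, h2, h3⟩, hpq⟩ := hmem
    rcases hpq with h | h
    · subst h
      exact ⟨q, by omega, by omega, by linarith⟩
    · subst h
      exact ⟨p, h1, by omega, h3⟩
  -- key' : key relations in terms of σf
  have key' : ∀ k ∈ F, (lam (σf k) : ℤ) = b - lam' k ∧ (lam' (σf k) : ℤ) = b - lam k := by
    intro k hk
    obtain ⟨hk1, hkC⟩ := (hmemF k).mp hk
    exact (key k hk1 hkC).2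
  -- eDel of addBox / removeBox
  have haddNu : ∀ j k : ℕ,
      eDel δ (addBox lam' j) k = if k = j then eDel δ lam' j + 1 else eDel δ lam' k := by
    intro j k
    simp only [eDel_apply]
    unfold addBox
    by_cases h : k = j
    · subst h
      rw [if_pos rfl, if_pos rfl]
      push_cast
      ring
    · rw [if_neg h, if_neg h]
  have hremNu : ∀ n : ℕ, 1 ≤ lam' n → ∀ k,
      eDel δ (removeBox lam' n) k = if k = n then eDel δ lam' n - 1 else eDel δ lam' k := by
    intro n hn k
    simp only [eDel_apply]
    unfold removeBox
    by_cases h : k = n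
    · subst h
      rw [if_pos rfl, if_pos rfl, Nat.cast_sub hn]
      push_cast
      ring
    · rw [if_neg h, if_neg h]
  have hlam'pos : ∀ k ∈ F, 1 ≤ lam' k := by
    intro k hk
    have := (hmemF k).mp hk
    omega
  by_cases hiF : i ∈ F
  · -- Case A : the removed box is in a changed row
    obtain ⟨j, hjdef⟩ : ∃ j, j = σf i := ⟨_, rfl⟩
    have hjF : j ∈ F := hjdef ▸ hσF i hiF
    have hσji : σf j = i := by rw [hjdef]; exact (hσfacts i hiF).2.2.1
    have hjnei : j ≠ i := by rw [hjdef]; exact (hσfacts i hiF).2.2.2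
    have hj1 : 1 ≤ j := ((hmemF j).mp hjF).1
    have he'j : eDel δ lam' j = -(eDel δ lam i) := by rw [hpair j hjF, hσji]
    have hback : ∀ k ∈ F, σf k = i → k = j := by
      intro k hk hc
      rw [← (hσfacts k hk).2.2.1, hc, ← hjdef]
    have hu : ∀ k, g₀ (eDel δ (removeBox lam i)) k =
        if k = j then eDel δ lam' j + 1 else eDel δ lam' k := by
      intro k
      rw [hg₀act]
      by_cases hk : k ∈ F
      · by_cases hkj : k = j
        · subst hkj
          rw [if_pos hk, if_pos rfl, hσji, heμi, he'j]
          ring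
        · have hσki : σf k ≠ i := fun hc => hkj (hback k hk hc)
          rw [if_pos hk, if_neg hkj, heμ _ hσki, ← hpair k hk]
      · have hki' : k ≠ i := fun hc => hk (hc ▸ hiF)
        have hkj' : k ≠ j := fun hc => hk (hc ▸ hjF)
        rw [if_neg hk, if_neg hkj', heμ k hki']
        exact (hsameE k hk).symm
    by_cases hgood : j = 1 ∨ lam' j < lam' (j - 1)
    · -- the box can be added at the end of row j of lam'
      refine ⟨g₀, hg₀mem, hg₀lam, addBox lam' j,
        addBox_isPartition lam' hl' j hj1 hgood, ?_⟩
      funext k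
      rw [hu k, haddNu j k]
    · -- bad case : row j - 1 of lam' has the same length as row j
      push_neg at hgood
      obtain ⟨hj2, hj3⟩ := hgood
      have hjm11 : 1 ≤ j - 1 := by omega
      have hjeq : lam' (j - 1) = lam' j := by
        have h := hl'.2.1 (j - 1) hjm11
        have hj' : j - 1 + 1 = j := by omega
        rw [hj'] at h
        omega
      have hzj : (j : ℤ) = a + 1 - i := by rw [hjdef]; exact hσZ i hiF
      have hrelij := (key' i hiF).2
      rw [← hjdef] at hrelij
      -- j - 1 is not a changed row
      have hjm1F : (j - 1) ∉ F := by
        intro hmem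
        have hz1 := hσZ _ hmem
        have hσj1 : σf (j - 1) = i + 1 := by omega
        have hrel := (key' _ hmem).1
        rw [hσj1] at hrel
        have : lam (i + 1) = lam i := by omega
        omega
      have hejm1 : eDel δ lam (j - 1) = 1 - eDel δ lam i := by
        rw [← hsameE _ hjm1F]
        have hc2 : ((j - 1 : ℕ) : ℝ) = (j : ℝ) - 1 := by
          have : ((j - 1 : ℕ) : ℤ) = (j : ℤ) - 1 := by omega
          exact_mod_cast this
        rw [eDel_apply, hjeq, hc2]
        rw [eDel_apply] at he'j
        linarith [he'j]
      obtain ⟨m, hm1, hmnei, hmval⟩ := hsingle ⟨j - 1, hjm11,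
        fun hc => hjm1F (hc ▸ hiF), hejm1⟩
      have hmF : m ∈ F := by
        by_contra hmF
        have h1 : eDel δ lam' m = eDel δ lam' j := by
          rw [hsameE m hmF, hmval, he'j]
        exact hmF ((eDel_inj δ lam' hl' m j hm1 hj1 h1) ▸ hjF)
      obtain ⟨n, hndef⟩ : ∃ n, n = σf m := ⟨_, rfl⟩
      have hnF : n ∈ F := hndef ▸ hσF m hmF
      have hn1 : 1 ≤ n := ((hmemF n).mp hnF).1
      have hσnm : σf n = m := by rw [hndef]; exact (hσfacts m hmF).2.2.1
      have he'n : eDel δ lam' n = eDel δ lam i := by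
        rw [hpair n hnF, hσnm, hmval]
        ring
      have hnej : n ≠ j := by
        intro hc
        exact hmnei (by rw [← hσnm, hc, hσji])
      have hzm : (m : ℤ) = a + 1 - n := by
        have := hσZ n hnF
        rw [hσnm] at this
        exact this
      have hreln := (key' m hmF).2
      rw [← hndef] at hreln
      -- row n + 1 of lam' is strictly shorter than row n
      have hnn : lam' (n + 1) < lam' n := by
        by_contra hc
        push_neg at hc
        have hneq : lam' (n + 1) = lam' n := by
          have := hl'.2.1 n hn1
          omega
        have hstep : eDel δ lam' (n + 1) = eDel δ lam i - 1 := by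
          rw [eDel_apply, hneq]
          rw [eDel_apply] at he'n
          push_cast
          push_cast at he'n
          linarith
        by_cases hn1F : (n + 1) ∈ F
        · have hz2 := hσZ _ hn1F
          have hσn1 : σf (n + 1) = m - 1 := by omega
          have hm2 : 2 ≤ m := by
            have := ((hmemF _).mp (hσF _ hn1F)).1
            omega
          have hrel1 := (key' _ hn1F).1
          rw [hσn1] at hrel1
          have hlameq : lam (m - 1) = lam m := by omega
          have hem1 : eDel δ lam (m - 1) = 1 - eDel δ lam i := by
            have hc1 : (lam (m - 1) : ℝ) = lam m := by exact_mod_cast hlameq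
            have hc2 : ((m - 1 : ℕ) : ℝ) = (m : ℝ) - 1 := by
              have : ((m - 1 : ℕ) : ℤ) = (m : ℤ) - 1 := by omega
              exact_mod_cast this
            rw [eDel_apply, hc1, hc2]
            rw [eDel_apply] at hmval
            linarith [hmval]
          have hmj : m - 1 = j - 1 :=
            eDel_inj δ lam hl (m - 1) (j - 1) (by omega) hjm11 (by rw [hem1, hejm1])
          exact hjm1F (hmj ▸ (hσn1 ▸ hσF _ hn1F))
        · refine hnostep (n + 1) (by omega) ?_
          rw [← hsameE _ hn1F]
          exact hstep
      refine ⟨negSwapPerm n j * g₀,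
        Subgroup.mul_mem _ (negSwapPerm_mem n j hn1 hj1 hnej) hg₀mem, ?_,
        removeBox lam' n, removeBox_isPartition lam' hl' n hn1 hnn, ?_⟩
      · funext k
        rw [Equiv.Perm.mul_apply, hg₀lam, coe_negSwapPerm]
        unfold negSwapFun
        split_ifs with h1 h2'
        · subst h1
          rw [he'j, he'n]
          ring
        · subst h2'
          rw [he'j, he'n]
        · rfl
      · funext k
        rw [Equiv.Perm.mul_apply, coe_negSwapPerm]
        unfold negSwapFun
        rw [hremNu n (hlam'pos n hnF) k]
        split_ifs with h1 h2'
        · subst h1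
          rw [hu j, if_pos rfl, he'j, he'n]
          ring
        · subst h2'
          rw [hu n, if_neg hnej, he'j, he'n]
        · rw [hu k, if_neg h2']
  · -- Case B : the removed box is in an unchanged row
    have hbR : (b : ℝ) = (a : ℝ) + (δ : ℝ) - 1 := by
      have : b = a + δ - 1 := by omega
      exact_mod_cast this
    have hii : lam' i = lam i := hsame i hiF
    have he'i : eDel δ lam' i = eDel δ lam i := hsameE i hiF
    have hu : ∀ k, g₀ (eDel δ (removeBox lam i)) k =
        if k = i then eDel δ lam' i - 1 else eDel δ lam' k := by
      intro k
      rw [hg₀act]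
      by_cases hk : k ∈ F
      · have hki : k ≠ i := fun hc => hiF (hc ▸ hk)
        have hσki : σf k ≠ i := fun hc => hiF (hc ▸ hσF k hk)
        rw [if_pos hk, if_neg hki, heμ _ hσki, ← hpair k hk]
      · by_cases hki : k = i
        · subst hki
          rw [if_neg hk, if_pos rfl, heμi, he'i]
        · rw [if_neg hk, if_neg hki, heμ k hki]
          exact (hsameE k hk).symm
    by_cases hgood : lam' (i + 1) < lam' i
    · refine ⟨g₀, hg₀mem, hg₀lam, removeBox lam' i,
        removeBox_isPartition lam' hl' i hi1 hgood, ?_⟩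
      funext k
      rw [hu k, hremNu i (by omega) k]
    · -- bad case : row i + 1 of lam' has the same length as row i
      push_neg at hgood
      have hieq : lam' (i + 1) = lam' i := by
        have := hl'.2.1 i hi1
        omega
      have hi1F : (i + 1) ∈ F := by
        rw [hmemF]
        constructor
        · omega
        · omega
      obtain ⟨t, htdef⟩ : ∃ t, t = σf (i + 1) := ⟨_, rfl⟩
      have htF : t ∈ F := htdef ▸ hσF _ hi1F
      have ht1 : 1 ≤ t := ((hmemF t).mp htF).1
      have htnei : t ≠ i := fun hc => hiF (hc ▸ htF)
      have hrel := (key' _ hi1F).1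
      have hz1 := hσZ _ hi1F
      have het : eDel δ lam t = 1 - eDel δ lam i := by
        have hc1 : (lam t : ℝ) = (b : ℝ) - lam i := by
          have h1 : (lam t : ℤ) = b - lam i := by
            rw [htdef]
            omega
          exact_mod_cast h1
        have hc2 : (t : ℝ) = (a : ℝ) - i := by
          have h2 : (t : ℤ) = a - i := by
            rw [htdef]
            omega
          exact_mod_cast h2
        rw [eDel_apply, eDel_apply, hc1, hc2, hbR]
        ring
      obtain ⟨m, hm1, hmnei, hmval⟩ := hsingle ⟨t, ht1, htnei, het⟩
      have hmF : m ∉ F := by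
        intro hmF
        have hx : eDel δ lam' (σf m) = eDel δ lam' i := by
          have hp := hpair (σf m) (hσF m hmF)
          rw [(hσfacts m hmF).2.2.1] at hp
          rw [hp, hmval, he'i]
          ring
        have hy := eDel_inj δ lam' hl' (σf m) i ((hmemF _).mp (hσF m hmF)).1 hi1 hx
        exact hiF (hy ▸ hσF m hmF)
      have he'm : eDel δ lam' m = -(eDel δ lam i) := by rw [hsameE m hmF, hmval]
      have hmm : m = 1 ∨ lam' m < lam' (m - 1) := by
        by_contra hc
        push_neg at hc
        obtain ⟨hm2', hc2⟩ := hc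
        have hm2 : 2 ≤ m := by omega
        have hmeq : lam' (m - 1) = lam' m := by
          have h := hl'.2.1 (m - 1) (by omega)
          have hmm1 : m - 1 + 1 = m := by omega
          rw [hmm1] at h
          omega
        have hem1' : eDel δ lam' (m - 1) = 1 - eDel δ lam i := by
          have hc2' : ((m - 1 : ℕ) : ℝ) = (m : ℝ) - 1 := by
            have : ((m - 1 : ℕ) : ℤ) = (m : ℤ) - 1 := by omega
            exact_mod_cast this
          rw [eDel_apply, hmeq, hc2']
          rw [eDel_apply] at he'm
          linarith [he'm]
        by_cases hm1F : (m - 1) ∈ F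
        · have hz2 := hσZ _ hm1F
          have hrel2 := (key' _ hm1F).1
          have ht'1 : 1 ≤ σf (m - 1) := ((hmemF _).mp (hσF _ hm1F)).1
          refine hnostep (σf (m - 1)) ht'1 ?_
          have hd1 : (lam (σf (m - 1)) : ℝ) = (b : ℝ) - lam m := by
            have h5 := hsame m hmF
            have : (lam (σf (m - 1)) : ℤ) = b - lam m := by omega
            exact_mod_cast this
          have hd2 : ((σf (m - 1) : ℕ) : ℝ) = (a : ℝ) + 2 - m := by
            have : ((σf (m - 1) : ℕ) : ℤ) = a + 2 - m := by omega
            exact_mod_cast this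
          simp only [eDel_apply] at hmval ⊢
          rw [hd1, hd2, hbR]
          linarith [hmval]
        · have hx : eDel δ lam (m - 1) = eDel δ lam t := by
            rw [← hsameE _ hm1F, hem1', het]
          have hy := eDel_inj δ lam hl (m - 1) t (by omega) ht1 hx
          exact hm1F (hy ▸ htF)
      refine ⟨negSwapPerm i m * g₀,
        Subgroup.mul_mem _ (negSwapPerm_mem i m hi1 hm1 (fun hc => hmnei hc.symm)) hg₀mem,
        ?_, addBox lam' m, addBox_isPartition lam' hl' m hm1 hmm, ?_⟩
      · funext k
        rw [Equiv.Perm.mul_apply, hg₀lam, coe_negSwapPerm]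
        unfold negSwapFun
        by_cases h1 : k = i
        · subst h1
          rw [if_pos rfl]
          linarith [he'm, he'i]
        · rw [if_neg h1]
          by_cases h2 : k = m
          · subst h2
            rw [if_pos rfl]
            linarith [he'm, he'i]
          · rw [if_neg h2]
      · funext k
        rw [Equiv.Perm.mul_apply, coe_negSwapPerm]
        unfold negSwapFun
        by_cases h1 : k = i
        · subst h1
          rw [if_pos rfl, haddNu, if_neg (fun hc => hmnei hc.symm), hu m,
            if_neg hmnei]
          linarith [he'm, he'i]
        · rw [if_neg h1]
          by_cases h2 : k = m
          · subst h2
            rw [if_pos rfl, haddNu, if_pos rfl, hu i, if_pos rfl]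
            linarith [he'm, he'i]
          · rw [if_neg h2, haddNu, if_neg h2, hu k, if_neg h1]
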